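/- Suppose the blocks of 𝐀, 𝐁, 𝐂, 𝐃 satisfy (A_{ij})* = −A_{ji}, (D_{ij})* = −D_{ji}, (B_{ij})* = C_{ji}, together with: A_{i+1,j+1} − D_{i,j} + B_{i+1,j} − C_{i,j+1} = 0 for 1 ≤ i, j ≤ n−1; A_{1,j+1} + B_{1,j} = 0 for 1 ≤ j ≤ n−1; and D_{n,j} + C_{n,j+1} = 0 for 1 ≤ j ≤ n−1. Then the monodromy map 𝓜(𝐮) = u_n⬝⋯⬝u_1 is a Poisson map: for all C^∞ functions φ, ψ : g → ℝ and all 𝐮 ∈ 𝐠, the bracket PB(𝐀,𝐁,𝐂,𝐃) of φ∘𝓜 and ψ∘𝓜 evaluated at 𝐮 equals the bracket PB(A_{11}, B_{1n}, C_{n1}, D_{nn}) of φ and ψ evaluated at 𝓜(𝐮). -/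

import Mathlib

open Matrix

attribute [local instance] Matrix.normedAddCommGroup Matrix.normedSpace

/-- The trace form `⟨X,Y⟩ = trace (X⬝Y)` on `g = Matrix (Fin N) (Fin N) ℝ`. -/
noncomputable def tf {N : ℕ} (X Y : Matrix (Fin N) (Fin N) ℝ) : ℝ := (X * Y).trace

/-- The gradient of a function `φ : g → ℝ` with respect to the trace form:
it satisfies `⟨∇φ(u), X⟩ = (fderiv ℝ φ u) X` for all `X`. -/
noncomputable def grad {N : ℕ} (φ : Matrix (Fin N) (Fin N) ℝ → ℝ)
    (u : Matrix (Fin N) (Fin N) ℝ) : Matrix (Fin N) (Fin N) ℝ :=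
  Matrix.of fun i j => fderiv ℝ φ u (Matrix.single j i 1)

/-- `dφ(u) = u ⬝ ∇φ(u)` -/
noncomputable def dr {N : ℕ} (φ : Matrix (Fin N) (Fin N) ℝ → ℝ)
    (u : Matrix (Fin N) (Fin N) ℝ) : Matrix (Fin N) (Fin N) ℝ := u * grad φ u

/-- `d'φ(u) = ∇φ(u) ⬝ u` -/
noncomputable def dl {N : ℕ} (φ : Matrix (Fin N) (Fin N) ℝ → ℝ)
    (u : Matrix (Fin N) (Fin N) ℝ) : Matrix (Fin N) (Fin N) ℝ := grad φ u * u

/-- The `j`-th partial gradient `∇_jΦ(𝐮)` of a function `Φ : 𝐠 → ℝ` on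
`𝐠 = Fin n → g`: it satisfies `⟨∇_jΦ(𝐮),X⟩ = DΦ(𝐮)(X placed in the j-th slot)`. -/
noncomputable def bigGrad {N n : ℕ} (Φ : (Fin n → Matrix (Fin N) (Fin N) ℝ) → ℝ)
    (u : Fin n → Matrix (Fin N) (Fin N) ℝ) (j : Fin n) : Matrix (Fin N) (Fin N) ℝ :=
  Matrix.of fun a b => fderiv ℝ Φ u (Pi.single j (Matrix.single b a 1))

/-- `d_jΦ(𝐮) = u_j ⬝ ∇_jΦ(𝐮)` -/
noncomputable def ddj {N n : ℕ} (Φ : (Fin n → Matrix (Fin N) (Fin N) ℝ) → ℝ)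
    (u : Fin n → Matrix (Fin N) (Fin N) ℝ) (j : Fin n) : Matrix (Fin N) (Fin N) ℝ :=
  u j * bigGrad Φ u j

/-- `d'_jΦ(𝐮) = ∇_jΦ(𝐮) ⬝ u_j` -/
noncomputable def ddj' {N n : ℕ} (Φ : (Fin n → Matrix (Fin N) (Fin N) ℝ) → ℝ)
    (u : Fin n → Matrix (Fin N) (Fin N) ℝ) (j : Fin n) : Matrix (Fin N) (Fin N) ℝ :=
  bigGrad Φ u j * u j

/-- The monodromy `𝓜(𝐮) = u_n ⬝ ⋯ ⬝ u_1` (in 1-based notation `u i = u_{i+1}`). -/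
noncomputable def monod {N n : ℕ} (u : Fin n → Matrix (Fin N) (Fin N) ℝ) :
    Matrix (Fin N) (Fin N) ℝ :=
  (List.ofFn u).reverse.prod

/-- The decreasing partial product `u_j ⬝ ⋯ ⬝ u_1` (`j` 1-based, `0 ≤ j ≤ n`). -/
noncomputable def downProd {N n : ℕ} (u : Fin n → Matrix (Fin N) (Fin N) ℝ) (j : ℕ) :
    Matrix (Fin N) (Fin N) ℝ :=
  ((List.ofFn u).take j).reverse.prod

/-- The decreasing partial product `u_n ⬝ ⋯ ⬝ u_{j+1}` (`j` 1-based, `0 ≤ j ≤ n`). -/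
noncomputable def upProd {N n : ℕ} (u : Fin n → Matrix (Fin N) (Fin N) ℝ) (j : ℕ) :
    Matrix (Fin N) (Fin N) ℝ :=
  ((List.ofFn u).drop j).reverse.prod

/-- `T_j = u_j ⬝ ⋯ ⬝ u_1 ⬝ u_n ⬝ ⋯ ⬝ u_{j+1}` (`j` 1-based; `T_0 = T_n = 𝓜(𝐮)`). -/
noncomputable def tmat {N n : ℕ} (u : Fin n → Matrix (Fin N) (Fin N) ℝ) (j : ℕ) :
    Matrix (Fin N) (Fin N) ℝ :=
  downProd u j * upProd u j

/-- The quadratic bracket PB(A,B,C,D) on `g`. -/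
noncomputable def pb {N : ℕ}
    (A B C D : Matrix (Fin N) (Fin N) ℝ →ₗ[ℝ] Matrix (Fin N) (Fin N) ℝ)
    (φ ψ : Matrix (Fin N) (Fin N) ℝ → ℝ) (u : Matrix (Fin N) (Fin N) ℝ) : ℝ :=
  tf (A (dl φ u)) (dl ψ u) - tf (D (dr φ u)) (dr ψ u)
    + tf (B (dr φ u)) (dl ψ u) - tf (C (dl φ u)) (dr ψ u)

/-- The quadratic bracket PB(𝐀,𝐁,𝐂,𝐃) on `𝐠 = Fin n → g`, for operators
encoded by blocks `A i j`, `B i j`, `C i j`, `D i j`. -/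
noncomputable def bigPB {N n : ℕ}
    (A B C D : Fin n → Fin n → (Matrix (Fin N) (Fin N) ℝ →ₗ[ℝ] Matrix (Fin N) (Fin N) ℝ))
    (Φ Ψ : (Fin n → Matrix (Fin N) (Fin N) ℝ) → ℝ)
    (u : Fin n → Matrix (Fin N) (Fin N) ℝ) : ℝ :=
  ∑ i, ∑ j,
    (tf (A i j (ddj' Φ u j)) (ddj' Ψ u i) - tf (D i j (ddj Φ u j)) (ddj Ψ u i)
      + tf (B i j (ddj Φ u j)) (ddj' Ψ u i) - tf (C i j (ddj' Φ u j)) (ddj Ψ u i))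

lemma tf_comm {N : ℕ} (X Y : Matrix (Fin N) (Fin N) ℝ) : tf X Y = tf Y X :=
  Matrix.trace_mul_comm X Y

lemma tf_stdBasisMatrix {N : ℕ} (W : Matrix (Fin N) (Fin N) ℝ) (a b : Fin N) :
    tf W (Matrix.single b a 1) = W a b := by
  simp [tf, Matrix.trace, Matrix.diag, Matrix.mul_apply, Matrix.single, ite_and,
    Finset.sum_ite_eq, Finset.sum_ite_eq']

lemma tf_clm {N : ℕ} (L : Matrix (Fin N) (Fin N) ℝ →L[ℝ] ℝ) (X : Matrix (Fin N) (Fin N) ℝ) :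
    tf (Matrix.of fun i j => L (Matrix.single j i 1)) X = L X := by
  conv_rhs => rw [matrix_eq_sum_single X]
  rw [map_sum]
  have : ∀ a b : Fin N, L (Matrix.single a b (X a b)) = X a b * L (Matrix.single a b 1) := by
    intro a b
    rw [show Matrix.single a b (X a b) = X a b • Matrix.single a b 1 from by
      simp [Matrix.smul_single], _root_.map_smul]
    simp
  simp only [map_sum, this]
  rw [tf, Matrix.trace, Finset.sum_comm]
  simp only [Matrix.diag_apply, Matrix.mul_apply, Matrix.of_apply]
  exact Finset.sum_congr rfl fun a _ => Finset.sum_congr rfl fun b _ => mul_comm _ _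

lemma mat_ext_tf {N : ℕ} {W W' : Matrix (Fin N) (Fin N) ℝ}
    (h : ∀ X, tf W X = tf W' X) : W = W' := by
  ext a b
  rw [← tf_stdBasisMatrix W a b, ← tf_stdBasisMatrix W' a b, h]

section

/-- the normed topology on matrices, preferred locally -/
@[reducible] noncomputable def matTop {N : ℕ} : TopologicalSpace (Matrix (Fin N) (Fin N) ℝ) :=
  (Matrix.normedAddCommGroup).toUniformSpace.toTopologicalSpace

attribute [local instance] matTop

noncomputable def mulCLM (N : ℕ) :
    Matrix (Fin N) (Fin N) ℝ →L[ℝ] Matrix (Fin N) (Fin N) ℝ →L[ℝ] Matrix (Fin N) (Fin N) ℝ :=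
  LinearMap.toContinuousLinearMap
  { toFun := fun A => LinearMap.toContinuousLinearMap (LinearMap.mulLeft ℝ A)
    map_add' := by intro A B; ext X; simp [add_mul]
    map_smul' := by intro c A; ext X; simp [smul_mul_assoc]
  }

@[simp] lemma mulCLM_apply {N : ℕ} (A B : Matrix (Fin N) (Fin N) ℝ) :
    mulCLM N A B = A * B := by
  simp [mulCLM]

lemma hasFDerivAt_matmul {N : ℕ} {E : Type*} [NormedAddCommGroup E] [NormedSpace ℝ E]
    {f g : E → Matrix (Fin N) (Fin N) ℝ} {f' g' : E →L[ℝ] Matrix (Fin N) (Fin N) ℝ} {x : E}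
    (hf : HasFDerivAt f f' x) (hg : HasFDerivAt g g' x) :
    HasFDerivAt (fun y => f y * g y)
      (((mulCLM N).flip (g x)).comp f' + ((mulCLM N) (f x)).comp g') x := by
  have h := ((mulCLM N).isBoundedBilinearMap.hasFDerivAt (f x, g x)).comp x (hf.prodMk hg)
  convert h using 1
  · rfl
  · rfl
  ext w
  simp [IsBoundedBilinearMap.deriv_apply]
  abel

/-- product u_{b-1} ⋯ u_a -/
noncomputable def mprod {N n : ℕ} (u : Fin n → Matrix (Fin N) (Fin N) ℝ) (a b : ℕ) :
    Matrix (Fin N) (Fin N) ℝ :=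
  (((List.ofFn u).take b).drop a).reverse.prod

lemma downProd_zero {N n : ℕ} (u : Fin n → Matrix (Fin N) (Fin N) ℝ) : downProd u 0 = 1 := by
  simp [downProd]

lemma downProd_succ {N n : ℕ} (u : Fin n → Matrix (Fin N) (Fin N) ℝ) (j : ℕ) (hj : j < n) :
    downProd u (j + 1) = u ⟨j, hj⟩ * downProd u j := by
  unfold downProd
  rw [List.take_succ]
  have : (List.ofFn u)[j]? = some (u ⟨j, hj⟩) := by
    rw [List.getElem?_eq_getElem (by simpa using hj)]
    simp
  rw [this]
  simp

lemma mprod_self {N n : ℕ} (u : Fin n → Matrix (Fin N) (Fin N) ℝ) (a : ℕ) : mprod u a a = 1 := by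
  simp [mprod, List.drop_take]

lemma mprod_succ {N n : ℕ} (u : Fin n → Matrix (Fin N) (Fin N) ℝ) (a b : ℕ)
    (hab : a ≤ b) (hb : b < n) :
    mprod u a (b + 1) = u ⟨b, hb⟩ * mprod u a b := by
  unfold mprod
  rw [List.take_succ]
  have : (List.ofFn u)[b]? = some (u ⟨b, hb⟩) := by
    rw [List.getElem?_eq_getElem (by simpa using hb)]
    simp
  rw [this, Option.toList_some, List.drop_append_of_le_length (by simp [hab, le_of_lt hb, Nat.min_eq_left]) ]
  simp

lemma mprod_n {N n : ℕ} (u : Fin n → Matrix (Fin N) (Fin N) ℝ) (a : ℕ) :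
    mprod u a n = upProd u a := by
  simp [mprod, upProd, List.take_of_length_le (le_of_eq (List.length_ofFn (f := u)))]

lemma downProd_n {N n : ℕ} (u : Fin n → Matrix (Fin N) (Fin N) ℝ) :
    downProd u n = monod u ∧ upProd u 0 = monod u ∧ upProd u n = 1 := by
  refine ⟨?_, ?_, ?_⟩
  · simp [downProd, monod, List.take_of_length_le (le_of_eq (List.length_ofFn (f := u)))]
  · simp [upProd, monod]
  · simp [upProd, List.drop_eq_nil_of_le (le_of_eq (List.length_ofFn (f := u)))]

lemma upProd_succ {N n : ℕ} (u : Fin n → Matrix (Fin N) (Fin N) ℝ) (j : ℕ) (hj : j < n) :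
    upProd u j = upProd u (j + 1) * u ⟨j, hj⟩ := by
  unfold upProd
  rw [← List.getElem_cons_drop (as := List.ofFn u) (i := j) (by simpa using hj)]
  simp

noncomputable def dD {N n : ℕ} (u : Fin n → Matrix (Fin N) (Fin N) ℝ) :
    ℕ → ((Fin n → Matrix (Fin N) (Fin N) ℝ) →L[ℝ] Matrix (Fin N) (Fin N) ℝ)
  | 0 => 0
  | (j+1) =>
    if hj : j < n then
      ((mulCLM N).flip (downProd u j)).comp (ContinuousLinearMap.proj ⟨j, hj⟩)
        + ((mulCLM N) (u ⟨j, hj⟩)).comp (dD u j)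
    else 0

lemma hasFDerivAt_downProd {N n : ℕ} (u : Fin n → Matrix (Fin N) (Fin N) ℝ) :
    ∀ j, j ≤ n → HasFDerivAt (fun w => downProd w j) (dD u j) u := by
  intro j
  induction j with
  | zero =>
    intro _
    simp only [downProd_zero, dD]
    exact hasFDerivAt_const _ _
  | succ j IH =>
    intro hj1
    have hj : j < n := hj1
    have h1 : HasFDerivAt (fun w : Fin n → Matrix (Fin N) (Fin N) ℝ => w ⟨j, hj⟩)
        (ContinuousLinearMap.proj (R := ℝ) (φ := fun _ : Fin n => Matrix (Fin N) (Fin N) ℝ)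
          ⟨j, hj⟩) u :=
      hasFDerivAt_apply ⟨j, hj⟩ u
    have h2 := hasFDerivAt_matmul (N := N) h1 (IH (le_of_lt hj))
    have heq : (fun w : Fin n → Matrix (Fin N) (Fin N) ℝ => downProd w (j+1))
        = fun w => w ⟨j, hj⟩ * downProd w j := by
      funext w; exact downProd_succ w j hj
    rw [show dD u (j+1) = ((mulCLM N).flip (downProd u j)).comp (ContinuousLinearMap.proj ⟨j, hj⟩)
        + ((mulCLM N) (u ⟨j, hj⟩)).comp (dD u j) from by rw [dD, dif_pos hj], heq]
    exact h2

lemma dD_single {N n : ℕ} (u : Fin n → Matrix (Fin N) (Fin N) ℝ) :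
    ∀ j, j ≤ n → ∀ (k : Fin n) (X : Matrix (Fin N) (Fin N) ℝ),
      dD u j (Pi.single k X)
        = if k.val < j then mprod u (k.val + 1) j * X * downProd u k.val else 0 := by
  intro j
  induction j with
  | zero => intro _ k X; simp [dD]
  | succ j IH =>
    intro hj1 k X
    have hj : j < n := hj1
    rw [show dD u (j+1) = ((mulCLM N).flip (downProd u j)).comp (ContinuousLinearMap.proj ⟨j, hj⟩)
        + ((mulCLM N) (u ⟨j, hj⟩)).comp (dD u j) from by rw [dD, dif_pos hj]]
    simp only [ContinuousLinearMap.add_apply, ContinuousLinearMap.comp_apply,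
      ContinuousLinearMap.proj_apply, ContinuousLinearMap.flip_apply, mulCLM_apply,
      IH (le_of_lt hj)]
    by_cases hk : k = ⟨j, hj⟩
    · subst hk
      simp only [Pi.single_eq_same]
      rw [if_neg (by simp), if_pos (by simp)]
      rw [mprod_self]
      simp
    · have hkj : (k : ℕ) ≠ j := fun h => hk (Fin.ext h)
      rw [Pi.single_eq_of_ne (Ne.symm hk), zero_mul, zero_add]
      by_cases hlt : (k : ℕ) < j
      · rw [if_pos hlt, if_pos (Nat.lt_succ_of_lt hlt),
          mprod_succ u (k.val+1) j (by omega) hj]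
        noncomm_ring
      · rw [if_neg hlt, if_neg (by omega), mul_zero]

lemma tf_grad {N : ℕ} (φ : Matrix (Fin N) (Fin N) ℝ → ℝ) (u X : Matrix (Fin N) (Fin N) ℝ) :
    tf (grad φ u) X = fderiv ℝ φ u X :=
  tf_clm (fderiv ℝ φ u) X

lemma monod_eq {N n : ℕ} : (fun w : Fin n → Matrix (Fin N) (Fin N) ℝ => downProd w n) = monod := by
  funext w
  simp [downProd, monod, List.take_of_length_le (le_of_eq (List.length_ofFn (f := w)))]

lemma fderiv_comp_monod {N n : ℕ} (φ : Matrix (Fin N) (Fin N) ℝ → ℝ)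
    (u : Fin n → Matrix (Fin N) (Fin N) ℝ) (hφ : DifferentiableAt ℝ φ (monod u))
    (j : Fin n) (X : Matrix (Fin N) (Fin N) ℝ) :
    fderiv ℝ (fun w => φ (monod w)) u (Pi.single j X)
      = fderiv ℝ φ (monod u) (upProd u (j.val + 1) * X * downProd u j.val) := by
  have hm : HasFDerivAt (monod (N := N) (n := n)) (dD u n) u := by
    have h := hasFDerivAt_downProd u n le_rfl
    rwa [monod_eq] at h
  have hc : HasFDerivAt (fun w => φ (monod w)) ((fderiv ℝ φ (monod u)).comp (dD u n)) u :=
    hφ.hasFDerivAt.comp u hm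
  rw [hc.fderiv]
  rw [ContinuousLinearMap.comp_apply, dD_single u n le_rfl j X, if_pos j.isLt, mprod_n]

lemma bigGrad_comp {N n : ℕ} (φ : Matrix (Fin N) (Fin N) ℝ → ℝ)
    (u : Fin n → Matrix (Fin N) (Fin N) ℝ) (hφ : DifferentiableAt ℝ φ (monod u)) (j : Fin n) :
    bigGrad (fun w => φ (monod w)) u j
      = downProd u j.val * grad φ (monod u) * upProd u (j.val + 1) := by
  ext a b
  show fderiv ℝ (fun w => φ (monod w)) u (Pi.single j (Matrix.single b a 1)) = _
  rw [fderiv_comp_monod φ u hφ j, ← tf_grad]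
  have : tf (grad φ (monod u))
      (upProd u (j.val + 1) * Matrix.single b a 1 * downProd u j.val)
      = tf (downProd u j.val * grad φ (monod u) * upProd u (j.val + 1))
          (Matrix.single b a 1) := by
    simp only [tf]
    rw [show grad φ (monod u) * (upProd u (j.val + 1) * Matrix.single b a 1 * downProd u j.val)
        = (grad φ (monod u) * upProd u (j.val + 1) * Matrix.single b a 1) * downProd u j.val by
      noncomm_ring]
    rw [Matrix.trace_mul_comm]
    congr 1
    noncomm_ring
  rw [this, tf_stdBasisMatrix]

lemma tf_zero_left {N : ℕ} (X : Matrix (Fin N) (Fin N) ℝ) : tf 0 X = 0 := by simp [tf]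
lemma tf_add_left {N : ℕ} (X Y Z : Matrix (Fin N) (Fin N) ℝ) :
    tf (X + Y) Z = tf X Z + tf Y Z := by simp [tf, add_mul]
lemma tf_sub_left {N : ℕ} (X Y Z : Matrix (Fin N) (Fin N) ℝ) :
    tf (X - Y) Z = tf X Z - tf Y Z := by simp [tf, sub_mul]
lemma tf_neg_right {N : ℕ} (X Y : Matrix (Fin N) (Fin N) ℝ) : tf X (-Y) = - tf X Y := by
  simp [tf]

lemma ddj'_comp {N n : ℕ} (φ : Matrix (Fin N) (Fin N) ℝ → ℝ)
    (u : Fin n → Matrix (Fin N) (Fin N) ℝ) (hφ : DifferentiableAt ℝ φ (monod u)) (j : Fin n) :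
    ddj' (fun w => φ (monod w)) u j
      = downProd u j.val * grad φ (monod u) * upProd u j.val := by
  rw [ddj', bigGrad_comp φ u hφ j, upProd_succ u j.val j.isLt]
  simp [mul_assoc]

lemma ddj_comp {N n : ℕ} (φ : Matrix (Fin N) (Fin N) ℝ → ℝ)
    (u : Fin n → Matrix (Fin N) (Fin N) ℝ) (hφ : DifferentiableAt ℝ φ (monod u)) (j : Fin n) :
    ddj (fun w => φ (monod w)) u j
      = downProd u (j.val + 1) * grad φ (monod u) * upProd u (j.val + 1) := by
  rw [ddj, bigGrad_comp φ u hφ j, downProd_succ u j.val j.isLt]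
  simp [mul_assoc]

lemma sum_corners {n : ℕ} (hn : 1 ≤ n) (f : ℕ → ℝ)
    (h : ∀ b, 0 < b → b < n → f b = 0) :
    ∑ b ∈ Finset.range (n + 1), f b = f 0 + f n := by
  rw [Finset.sum_range_succ]
  congr 1
  apply Finset.sum_eq_single_of_mem 0 (Finset.mem_range.2 (by omega))
  intro b hb hb0
  exact h b (by omega) (Finset.mem_range.1 hb)

lemma sum_range_succ_of_last_zero {n : ℕ} (f : ℕ → ℝ) (h : f n = 0) :
    ∑ b ∈ Finset.range (n + 1), f b = ∑ b ∈ Finset.range n, f b := by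
  rw [Finset.sum_range_succ, h, add_zero]

lemma sum_range_succ_shift {n : ℕ} (f : ℕ → ℝ) (h : f 0 = 0) :
    ∑ b ∈ Finset.range (n + 1), f b = ∑ b ∈ Finset.range n, f (b + 1) := by
  rw [Finset.sum_range_succ', h, add_zero]

end


theorem statement9 (N n : ℕ) (hN : 1 ≤ N) (hn : 1 ≤ n)
    (A B C D : Fin n → Fin n → (Matrix (Fin N) (Fin N) ℝ →ₗ[ℝ] Matrix (Fin N) (Fin N) ℝ))
    -- skew-symmetry assumptions (A_{ij})* = −A_{ji}, (D_{ij})* = −D_{ji}, (B_{ij})* = C_{ji}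
    (hA : ∀ i j X Y, tf (A i j X) Y = - tf X (A j i Y))
    (hD : ∀ i j X Y, tf (D i j X) Y = - tf X (D j i Y))
    (hBC : ∀ i j X Y, tf (B i j X) Y = tf X (C j i Y))
    -- A_{i+1,j+1} − D_{i,j} + B_{i+1,j} − C_{i,j+1} = 0 for 1 ≤ i,j ≤ n−1 (here 0-based)
    (h1 : ∀ (i j : Fin n) (hi : i.val + 1 < n) (hj : j.val + 1 < n),
      A ⟨i.val + 1, hi⟩ ⟨j.val + 1, hj⟩ - D i j + B ⟨i.val + 1, hi⟩ j - C i ⟨j.val + 1, hj⟩ = 0)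
    -- A_{1,j+1} + B_{1,j} = 0 for 1 ≤ j ≤ n−1
    (h2 : ∀ (j : Fin n) (hj : j.val + 1 < n),
      A ⟨0, by omega⟩ ⟨j.val + 1, hj⟩ + B ⟨0, by omega⟩ j = 0)
    -- D_{n,j} + C_{n,j+1} = 0 for 1 ≤ j ≤ n−1
    (h3 : ∀ (j : Fin n) (hj : j.val + 1 < n),
      D ⟨n - 1, by omega⟩ j + C ⟨n - 1, by omega⟩ ⟨j.val + 1, hj⟩ = 0) :
    -- the monodromy map 𝓜 is Poisson
    ∀ (φ ψ : Matrix (Fin N) (Fin N) ℝ → ℝ), ContDiff ℝ (⊤ : ℕ∞) φ → ContDiff ℝ (⊤ : ℕ∞) ψ →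
      ∀ u : Fin n → Matrix (Fin N) (Fin N) ℝ,
        bigPB A B C D (fun w => φ (monod w)) (fun w => ψ (monod w)) u
          = pb (A ⟨0, by omega⟩ ⟨0, by omega⟩) (B ⟨0, by omega⟩ ⟨n - 1, by omega⟩)
              (C ⟨n - 1, by omega⟩ ⟨0, by omega⟩) (D ⟨n - 1, by omega⟩ ⟨n - 1, by omega⟩)
              φ ψ (monod u) := by
  intro φ ψ hφc hψc u
  have hφd : DifferentiableAt ℝ φ (monod u) := (hφc.differentiable (by simp)).differentiableAt
  have hψd : DifferentiableAt ℝ ψ (monod u) := (hψc.differentiable (by simp)).differentiableAt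
  set M := monod u with hM
  set F : ℕ → Matrix (Fin N) (Fin N) ℝ := fun j => downProd u j * grad φ M * upProd u j with hF
  set G : ℕ → Matrix (Fin N) (Fin N) ℝ := fun j => downProd u j * grad ψ M * upProd u j with hG
  set A' : ℕ → ℕ → (Matrix (Fin N) (Fin N) ℝ →ₗ[ℝ] Matrix (Fin N) (Fin N) ℝ) :=
    fun a b => if h : a < n ∧ b < n then A ⟨a, h.1⟩ ⟨b, h.2⟩ else 0 with hA'
  set B' : ℕ → ℕ → (Matrix (Fin N) (Fin N) ℝ →ₗ[ℝ] Matrix (Fin N) (Fin N) ℝ) :=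
    fun a b => if h : a < n ∧ b < n then B ⟨a, h.1⟩ ⟨b, h.2⟩ else 0 with hB'
  set C' : ℕ → ℕ → (Matrix (Fin N) (Fin N) ℝ →ₗ[ℝ] Matrix (Fin N) (Fin N) ℝ) :=
    fun a b => if h : a < n ∧ b < n then C ⟨a, h.1⟩ ⟨b, h.2⟩ else 0 with hC'
  set D' : ℕ → ℕ → (Matrix (Fin N) (Fin N) ℝ →ₗ[ℝ] Matrix (Fin N) (Fin N) ℝ) :=
    fun a b => if h : a < n ∧ b < n then D ⟨a, h.1⟩ ⟨b, h.2⟩ else 0 with hD'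
  set e : ℕ → ℕ → ℝ := fun a b =>
    tf (A' a b (F b)) (G a)
    + (if b = 0 then 0 else tf (B' a (b - 1) (F b)) (G a))
    - (if a = 0 then 0 else tf (C' (a - 1) b (F b)) (G a))
    - (if a = 0 ∨ b = 0 then 0 else tf (D' (a - 1) (b - 1) (F b)) (G a)) with he
  set T : ℕ → ℕ → ℝ := fun a b =>
    tf (A' a b (F b)) (G a) + tf (B' a b (F (b + 1))) (G a)
      - tf (C' a b (F b)) (G (a + 1)) - tf (D' a b (F (b + 1))) (G (a + 1)) with hT
  -- Step 1: bigPB as a double range-n sum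
  have hop1 : bigPB A B C D (fun w => φ (monod w)) (fun w => ψ (monod w)) u
      = ∑ a ∈ Finset.range n, ∑ b ∈ Finset.range n, T a b := by
    have key : ∀ i j : Fin n,
        tf (A i j (ddj' (fun w => φ (monod w)) u j)) (ddj' (fun w => ψ (monod w)) u i)
          - tf (D i j (ddj (fun w => φ (monod w)) u j)) (ddj (fun w => ψ (monod w)) u i)
          + tf (B i j (ddj (fun w => φ (monod w)) u j)) (ddj' (fun w => ψ (monod w)) u i)
          - tf (C i j (ddj' (fun w => φ (monod w)) u j)) (ddj (fun w => ψ (monod w)) u i)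
        = T i.val j.val := by
      intro i j
      rw [ddj'_comp φ u hφd, ddj'_comp ψ u hψd, ddj_comp φ u hφd, ddj_comp ψ u hψd]
      have e1 : A' i.val j.val = A i j := by simp [hA']
      have e2 : B' i.val j.val = B i j := by simp [hB']
      have e3 : C' i.val j.val = C i j := by simp [hC']
      have e4 : D' i.val j.val = D i j := by simp [hD']
      rw [hT]
      simp only [e1, e2, e3, e4, hF, hG]
      ring
    calc bigPB A B C D (fun w => φ (monod w)) (fun w => ψ (monod w)) u
        = ∑ i : Fin n, ∑ j : Fin n, T i.val j.val := by
          simp only [bigPB]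
          exact Finset.sum_congr rfl fun i _ => Finset.sum_congr rfl fun j _ => key i j
      _ = ∑ i : Fin n, ∑ b ∈ Finset.range n, T i.val b :=
          Finset.sum_congr rfl fun i _ => Fin.sum_univ_eq_sum_range (fun b => T i.val b) n
      _ = _ := Fin.sum_univ_eq_sum_range (fun a => ∑ b ∈ Finset.range n, T a b) n
  have hzA : ∀ a b : ℕ, ¬(a < n ∧ b < n) → ∀ X Y, tf (A' a b X) Y = 0 := by
    intro a b h X Y; rw [hA']; simp only [dif_neg h]; simp [tf]
  have hzB : ∀ a b : ℕ, ¬(a < n ∧ b < n) → ∀ X Y, tf (B' a b X) Y = 0 := by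
    intro a b h X Y; rw [hB']; simp only [dif_neg h]; simp [tf]
  have hzC : ∀ a b : ℕ, ¬(a < n ∧ b < n) → ∀ X Y, tf (C' a b X) Y = 0 := by
    intro a b h X Y; rw [hC']; simp only [dif_neg h]; simp [tf]
  have hzD : ∀ a b : ℕ, ¬(a < n ∧ b < n) → ∀ X Y, tf (D' a b X) Y = 0 := by
    intro a b h X Y; rw [hD']; simp only [dif_neg h]; simp [tf]
  -- Step 2: extend to range (n+1)
  have hop2 : ∑ a ∈ Finset.range (n + 1), ∑ b ∈ Finset.range (n + 1), e a b
      = ∑ a ∈ Finset.range n, ∑ b ∈ Finset.range n, T a b := by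
    have esplit : ∀ a b : ℕ, e a b
        = tf (A' a b (F b)) (G a)
          + (if b = 0 then 0 else tf (B' a (b - 1) (F b)) (G a))
          - (if a = 0 then 0 else tf (C' (a - 1) b (F b)) (G a))
          - (if a = 0 ∨ b = 0 then 0 else tf (D' (a - 1) (b - 1) (F b)) (G a)) := fun a b => rfl
    have S1 : ∑ a ∈ Finset.range (n + 1), ∑ b ∈ Finset.range (n + 1), tf (A' a b (F b)) (G a)
        = ∑ a ∈ Finset.range n, ∑ b ∈ Finset.range n, tf (A' a b (F b)) (G a) := by
      rw [sum_range_succ_of_last_zero _ (Finset.sum_eq_zero fun b _ => hzA n b (by omega) _ _)]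
      exact Finset.sum_congr rfl fun a _ =>
        sum_range_succ_of_last_zero _ (hzA a n (by omega) _ _)
    have S2 : ∑ a ∈ Finset.range (n + 1), ∑ b ∈ Finset.range (n + 1),
          (if b = 0 then 0 else tf (B' a (b - 1) (F b)) (G a))
        = ∑ a ∈ Finset.range n, ∑ b ∈ Finset.range n, tf (B' a b (F (b + 1))) (G a) := by
      rw [sum_range_succ_of_last_zero _ (Finset.sum_eq_zero fun b _ => by
        by_cases hb : b = 0
        · simp [hb]
        · rw [if_neg hb]; exact hzB n (b - 1) (by omega) _ _)]
      refine Finset.sum_congr rfl fun a _ => ?_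
      rw [sum_range_succ_shift _ (by simp)]
      exact Finset.sum_congr rfl fun b _ => by simp
    have S3 : ∑ a ∈ Finset.range (n + 1), ∑ b ∈ Finset.range (n + 1),
          (if a = 0 then 0 else tf (C' (a - 1) b (F b)) (G a))
        = ∑ a ∈ Finset.range n, ∑ b ∈ Finset.range n, tf (C' a b (F b)) (G (a + 1)) := by
      rw [sum_range_succ_shift _ (by simp)]
      refine Finset.sum_congr rfl fun a _ => ?_
      rw [sum_range_succ_of_last_zero _ (by
        rw [if_neg (by omega)]; exact hzC a n (by omega) _ _)]
      exact Finset.sum_congr rfl fun b _ => by simp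
    have S4 : ∑ a ∈ Finset.range (n + 1), ∑ b ∈ Finset.range (n + 1),
          (if a = 0 ∨ b = 0 then 0 else tf (D' (a - 1) (b - 1) (F b)) (G a))
        = ∑ a ∈ Finset.range n, ∑ b ∈ Finset.range n, tf (D' a b (F (b + 1))) (G (a + 1)) := by
      rw [sum_range_succ_shift _ (by simp)]
      refine Finset.sum_congr rfl fun a _ => ?_
      rw [sum_range_succ_shift _ (by simp)]
      exact Finset.sum_congr rfl fun b _ => by simp
    calc ∑ a ∈ Finset.range (n + 1), ∑ b ∈ Finset.range (n + 1), e a b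
        = (∑ a ∈ Finset.range (n + 1), ∑ b ∈ Finset.range (n + 1), tf (A' a b (F b)) (G a))
          + (∑ a ∈ Finset.range (n + 1), ∑ b ∈ Finset.range (n + 1),
              (if b = 0 then 0 else tf (B' a (b - 1) (F b)) (G a)))
          - (∑ a ∈ Finset.range (n + 1), ∑ b ∈ Finset.range (n + 1),
              (if a = 0 then 0 else tf (C' (a - 1) b (F b)) (G a)))
          - (∑ a ∈ Finset.range (n + 1), ∑ b ∈ Finset.range (n + 1),
              (if a = 0 ∨ b = 0 then 0 else tf (D' (a - 1) (b - 1) (F b)) (G a))) := by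
            simp only [esplit, Finset.sum_add_distrib, Finset.sum_sub_distrib]
      _ = _ := by
            rw [S1, S2, S3, S4, hT]
            simp only [Finset.sum_add_distrib, Finset.sum_sub_distrib]
  -- pointwise vanishing for middle b
  have hmidb : ∀ a, a ≤ n → ∀ b, 0 < b → b < n → e a b = 0 := by
    intro a ha b hb0 hbn
    obtain ⟨j, rfl⟩ : ∃ j, b = j + 1 := ⟨b - 1, by omega⟩
    have hjn : j + 1 < n := hbn
    have hEB : B' a (j + 1 - 1) = B' a j := by norm_num
    rcases Nat.eq_zero_or_pos a with ha0 | ha0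
    · -- a = 0 : use h2
      subst ha0
      have hop := h2 ⟨j, by omega⟩ (show ((⟨j, by omega⟩ : Fin n) : ℕ) + 1 < n by simpa using hjn)
      have hsc := congrArg (fun L : Matrix (Fin N) (Fin N) ℝ →ₗ[ℝ] Matrix (Fin N) (Fin N) ℝ =>
        tf (L (F (j + 1))) (G 0)) hop
      simp only [LinearMap.add_apply, LinearMap.zero_apply, tf_add_left, tf_zero_left] at hsc
      have eA : A' 0 (j + 1) = A ⟨0, by omega⟩ ⟨(⟨j, by omega⟩ : Fin n).val + 1, by simpa using hjn⟩ := by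
        simp only [hA', dif_pos (show 0 < n ∧ j + 1 < n from ⟨by omega, hjn⟩)]
        try norm_num
      have eB : B' 0 j = B ⟨0, by omega⟩ ⟨j, by omega⟩ := by
        simp only [hB', dif_pos (show 0 < n ∧ j < n from ⟨by omega, by omega⟩)]
      rw [he]
      simp only [if_neg (by omega : ¬ j + 1 = 0), if_pos rfl, eq_self_iff_true, if_true,
        true_or, hEB, eA, eB]
      linarith [hsc]
    · rcases Nat.lt_or_ge a n with han | han
      · -- 0 < a < n : use h1
        obtain ⟨i, rfl⟩ : ∃ i, a = i + 1 := ⟨a - 1, by omega⟩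
        have hin : i + 1 < n := han
        have hop := h1 ⟨i, by omega⟩ ⟨j, by omega⟩
          (show ((⟨i, by omega⟩ : Fin n) : ℕ) + 1 < n by simpa using hin)
          (show ((⟨j, by omega⟩ : Fin n) : ℕ) + 1 < n by simpa using hjn)
        have hsc := congrArg (fun L : Matrix (Fin N) (Fin N) ℝ →ₗ[ℝ] Matrix (Fin N) (Fin N) ℝ =>
          tf (L (F (j + 1))) (G (i + 1))) hop
        simp only [LinearMap.add_apply, LinearMap.sub_apply, LinearMap.zero_apply,
          tf_add_left, tf_sub_left, tf_zero_left] at hsc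
        have eA : A' (i + 1) (j + 1)
            = A ⟨(⟨i, by omega⟩ : Fin n).val + 1, by simpa using hin⟩
                ⟨(⟨j, by omega⟩ : Fin n).val + 1, by simpa using hjn⟩ := by
          simp only [hA', dif_pos (show i + 1 < n ∧ j + 1 < n from ⟨hin, hjn⟩)]
          try norm_num
        have eB : B' (i + 1) j
            = B ⟨(⟨i, by omega⟩ : Fin n).val + 1, by simpa using hin⟩ ⟨j, by omega⟩ := by
          simp only [hB', dif_pos (show i + 1 < n ∧ j < n from ⟨hin, by omega⟩)]
          try norm_num
        have eC : C' (i + 1 - 1) (j + 1)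
            = C ⟨i, by omega⟩ ⟨(⟨j, by omega⟩ : Fin n).val + 1, by simpa using hjn⟩ := by
          simp only [show i + 1 - 1 = i from rfl, hC',
            dif_pos (show i < n ∧ j + 1 < n from ⟨by omega, hjn⟩)]
          try norm_num
        have eD : D' (i + 1 - 1) (j + 1 - 1) = D ⟨i, by omega⟩ ⟨j, by omega⟩ := by
          simp only [show i + 1 - 1 = i from rfl, show j + 1 - 1 = j from rfl, hD',
            dif_pos (show i < n ∧ j < n from ⟨by omega, by omega⟩)]
        rw [he]
        simp only [if_neg (by omega : ¬ j + 1 = 0), if_neg (by omega : ¬ i + 1 = 0),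
          if_neg (show ¬ (i + 1 = 0 ∨ j + 1 = 0) by omega), hEB, eA, eB, eC, eD]
        linarith [hsc]
      · -- a = n : use h3
        have han' : a = n := by omega
        rw [han']
        have hop := h3 ⟨j, by omega⟩ (show ((⟨j, by omega⟩ : Fin n) : ℕ) + 1 < n by simpa using hjn)
        have hsc := congrArg (fun L : Matrix (Fin N) (Fin N) ℝ →ₗ[ℝ] Matrix (Fin N) (Fin N) ℝ =>
          tf (L (F (j + 1))) (G n)) hop
        simp only [LinearMap.add_apply, LinearMap.zero_apply, tf_add_left, tf_zero_left] at hsc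
        have eC : C' (n - 1) (j + 1)
            = C ⟨n - 1, by omega⟩ ⟨(⟨j, by omega⟩ : Fin n).val + 1, by simpa using hjn⟩ := by
          simp only [hC', dif_pos (show n - 1 < n ∧ j + 1 < n from ⟨by omega, hjn⟩)]
          try norm_num
        have eD : D' (n - 1) (j + 1 - 1) = D ⟨n - 1, by omega⟩ ⟨j, by omega⟩ := by
          simp only [show j + 1 - 1 = j from rfl, hD',
            dif_pos (show n - 1 < n ∧ j < n from ⟨by omega, by omega⟩)]
        rw [he]
        simp only [if_neg (by omega : ¬ j + 1 = 0), if_neg (by omega : ¬ n = 0),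
          if_neg (show ¬ (n = 0 ∨ j + 1 = 0) by omega), eC, eD,
          hzA n (j + 1) (by omega) (F (j + 1)) (G n),
          hzB n (j + 1 - 1) (by omega) (F (j + 1)) (G n)]
        linarith [hsc]
  -- pointwise vanishing for middle a, b ∈ {0, n}
  have hmida0 : ∀ a, 0 < a → a < n → e a 0 = 0 := by
    intro a ha0 han
    obtain ⟨i, rfl⟩ : ∃ i, a = i + 1 := ⟨a - 1, by omega⟩
    have hin : i + 1 < n := han
    have hop := h2 ⟨i, by omega⟩ (show ((⟨i, by omega⟩ : Fin n) : ℕ) + 1 < n by simpa using hin)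
    -- tf (A ⟨i+1⟩ ⟨0⟩ X) Y = tf (C ⟨i⟩ ⟨0⟩ X) Y
    have key : ∀ X Y, tf (A ⟨i + 1, hin⟩ ⟨0, by omega⟩ X) Y = tf (C ⟨i, by omega⟩ ⟨0, by omega⟩ X) Y := by
      intro X Y
      have t2 : A ⟨0, by omega⟩ ⟨i + 1, hin⟩ Y = - B ⟨0, by omega⟩ ⟨i, by omega⟩ Y := by
        have := congrArg (fun L : Matrix (Fin N) (Fin N) ℝ →ₗ[ℝ] Matrix (Fin N) (Fin N) ℝ => L Y) hop
        simp only [LinearMap.add_apply, LinearMap.zero_apply] at this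
        have h' := eq_neg_of_add_eq_zero_left this
        convert h' using 3
        try norm_num
      calc tf (A ⟨i + 1, hin⟩ ⟨0, by omega⟩ X) Y
          = - tf X (A ⟨0, by omega⟩ ⟨i + 1, hin⟩ Y) := hA _ _ X Y
        _ = tf X (B ⟨0, by omega⟩ ⟨i, by omega⟩ Y) := by rw [t2, tf_neg_right, neg_neg]
        _ = tf (B ⟨0, by omega⟩ ⟨i, by omega⟩ Y) X := tf_comm _ _
        _ = tf Y (C ⟨i, by omega⟩ ⟨0, by omega⟩ X) := hBC _ _ Y X
        _ = tf (C ⟨i, by omega⟩ ⟨0, by omega⟩ X) Y := tf_comm _ _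
    have eA : A' (i + 1) 0 = A ⟨i + 1, hin⟩ ⟨0, by omega⟩ := by
      simp only [hA', dif_pos (show i + 1 < n ∧ 0 < n from ⟨hin, by omega⟩)]
    have eC : C' (i + 1 - 1) 0 = C ⟨i, by omega⟩ ⟨0, by omega⟩ := by
      simp only [show i + 1 - 1 = i from rfl, hC',
        dif_pos (show i < n ∧ 0 < n from ⟨by omega, by omega⟩)]
    rw [he]
    simp only [if_pos rfl, if_neg (by omega : ¬ i + 1 = 0), or_true, if_true, eA, eC]
    have := key (F 0) (G (i + 1))
    linarith [this]
  have hmidan : ∀ a, 0 < a → a < n → e a n = 0 := by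
    intro a ha0 han
    obtain ⟨i, rfl⟩ : ∃ i, a = i + 1 := ⟨a - 1, by omega⟩
    have hin : i + 1 < n := han
    have hop := h3 ⟨i, by omega⟩ (show ((⟨i, by omega⟩ : Fin n) : ℕ) + 1 < n by simpa using hin)
    have key : ∀ X Y, tf (B ⟨i + 1, hin⟩ ⟨n - 1, by omega⟩ X) Y
        = tf (D ⟨i, by omega⟩ ⟨n - 1, by omega⟩ X) Y := by
      intro X Y
      have t2 : C ⟨n - 1, by omega⟩ ⟨i + 1, hin⟩ Y = - D ⟨n - 1, by omega⟩ ⟨i, by omega⟩ Y := by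
        have := congrArg (fun L : Matrix (Fin N) (Fin N) ℝ →ₗ[ℝ] Matrix (Fin N) (Fin N) ℝ => L Y) hop
        simp only [LinearMap.add_apply, LinearMap.zero_apply] at this
        have h' := eq_neg_of_add_eq_zero_right this
        convert h' using 3
        try norm_num
      calc tf (B ⟨i + 1, hin⟩ ⟨n - 1, by omega⟩ X) Y
          = tf X (C ⟨n - 1, by omega⟩ ⟨i + 1, hin⟩ Y) := hBC _ _ X Y
        _ = - tf X (D ⟨n - 1, by omega⟩ ⟨i, by omega⟩ Y) := by rw [t2, tf_neg_right]
        _ = tf (D ⟨i, by omega⟩ ⟨n - 1, by omega⟩ X) Y := by rw [hD _ _ X Y]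
    have eB : B' (i + 1) (n - 1) = B ⟨i + 1, hin⟩ ⟨n - 1, by omega⟩ := by
      simp only [hB', dif_pos (show i + 1 < n ∧ n - 1 < n from ⟨hin, by omega⟩)]
    have eD : D' i (n - 1) = D ⟨i, by omega⟩ ⟨n - 1, by omega⟩ := by
      simp only [hD', dif_pos (show i < n ∧ n - 1 < n from ⟨by omega, by omega⟩)]
    rw [he]
    simp only [if_neg (by omega : ¬ n = 0), if_neg (by omega : ¬ i + 1 = 0),
      if_neg (show ¬ (i + 1 = 0 ∨ n = 0) by omega), Nat.add_sub_cancel, eB, eD,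
      hzA (i + 1) n (by omega) (F n) (G (i + 1)),
      hzC i n (by omega) (F n) (G (i + 1))]
    have := key (F n) (G (i + 1))
    linarith [this]
  -- collapse the double sum to the four corners
  have hsum : ∑ a ∈ Finset.range (n + 1), ∑ b ∈ Finset.range (n + 1), e a b
      = e 0 0 + e 0 n + e n 0 + e n n := by
    rw [sum_corners hn (fun a => ∑ b ∈ Finset.range (n + 1), e a b) (fun a ha0 han =>
      Finset.sum_eq_zero fun b hb => by
        rcases Nat.eq_zero_or_pos b with hb0 | hb0
        · subst hb0; exact hmida0 a ha0 han
        · rcases Nat.lt_or_ge b n with hbn | hbn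
          · exact hmidb a (by omega) b hb0 hbn
          · have : b = n := by have := Finset.mem_range.1 hb; omega
            subst this; exact hmidan a ha0 han)]
    rw [sum_corners hn (fun b => e 0 b) (fun b hb0 hbn => hmidb 0 (by omega) b hb0 hbn),
      sum_corners hn (fun b => e n b) (fun b hb0 hbn => hmidb n le_rfl b hb0 hbn)]
    ring
  -- the corner values
  have hF0 : F 0 = dl φ M := by
    rw [hF]; simp only [downProd_zero, (downProd_n u).2.1, one_mul, dl, hM]
  have hFn : F n = dr φ M := by
    rw [hF]; simp only [(downProd_n u).1, (downProd_n u).2.2, mul_one, dr, hM]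
  have hG0 : G 0 = dl ψ M := by
    rw [hG]; simp only [downProd_zero, (downProd_n u).2.1, one_mul, dl, hM]
  have hGn : G n = dr ψ M := by
    rw [hG]; simp only [(downProd_n u).1, (downProd_n u).2.2, mul_one, dr, hM]
  have hc00 : e 0 0 = tf (A ⟨0, by omega⟩ ⟨0, by omega⟩ (dl φ M)) (dl ψ M) := by
    have eA : A' 0 0 = A ⟨0, by omega⟩ ⟨0, by omega⟩ := by
      simp only [hA', dif_pos (show 0 < n ∧ 0 < n from ⟨by omega, by omega⟩)]
    rw [he]
    simp only [if_pos rfl, eq_self_iff_true, if_true, true_or, eA, hF0, hG0]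
    ring
  have hc0n : e 0 n = tf (B ⟨0, by omega⟩ ⟨n - 1, by omega⟩ (dr φ M)) (dl ψ M) := by
    have eB : B' 0 (n - 1) = B ⟨0, by omega⟩ ⟨n - 1, by omega⟩ := by
      simp only [hB', dif_pos (show 0 < n ∧ n - 1 < n from ⟨by omega, by omega⟩)]
    rw [he]
    simp only [if_pos rfl, eq_self_iff_true, if_true, true_or,
      if_neg (show ¬ n = 0 by omega), eB, hFn, hG0,
      hzA 0 n (by omega)]
    ring
  have hcn0 : e n 0 = - tf (C ⟨n - 1, by omega⟩ ⟨0, by omega⟩ (dl φ M)) (dr ψ M) := by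
    have eC : C' (n - 1) 0 = C ⟨n - 1, by omega⟩ ⟨0, by omega⟩ := by
      simp only [hC', dif_pos (show n - 1 < n ∧ 0 < n from ⟨by omega, by omega⟩)]
    rw [he]
    simp only [if_pos rfl, eq_self_iff_true, if_true, or_true,
      if_neg (show ¬ n = 0 by omega), eC, hF0, hGn,
      hzA n 0 (by omega)]
    ring
  have hcnn : e n n = - tf (D ⟨n - 1, by omega⟩ ⟨n - 1, by omega⟩ (dr φ M)) (dr ψ M) := by
    have eD : D' (n - 1) (n - 1) = D ⟨n - 1, by omega⟩ ⟨n - 1, by omega⟩ := by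
      simp only [hD', dif_pos (show n - 1 < n ∧ n - 1 < n from ⟨by omega, by omega⟩)]
    rw [he]
    simp only [if_neg (show ¬ n = 0 by omega), if_neg (show ¬ (n = 0 ∨ n = 0) by omega),
      eD, hFn, hGn,
      hzA n n (by omega),
      hzB n (n - 1) (by omega),
      hzC (n - 1) n (by omega)]
    ring
  rw [hop1, ← hop2, hsum, hc00, hc0n, hcn0, hcnn, pb]
  ring
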